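/- arXiv:1903.04919 — 3 statements merged into one kernel-verified Lean document; each statement's English description precedes it below -/
import Mathlib

section
/- For the one-factor Poisson model with m variables, any critical point (λ̂, μ̂1, ..., μ̂m) of the likelihood L(λ, μ1, ..., μm) = e^{-n(λ+μ1+...+μm)} Π_{i=1}^n Σ_{u=0}^{min(y_{i1},...,y_{im})} (λ^u/u!) Π_{k=1}^m μ_k^{y_{ik}-u}/(y_{ik}-u)! with ∂L/∂λ = 0 and ∂L/∂μ_k = 0 satisfies ȳ_k = μ̂_k + λ̂ for each k = 1, ..., m, where ȳ_k = n^{-1} Σ_{i=1}^n y_{ik}. -/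
/-!
Write `L = e^{-n(λ + Σ μ)} ∏ᵢ Sᵢ`. Each summand of `Sᵢ` carries `λ^u μ_k^{y_ik - u}`, which is
homogeneous of degree `y_ik` in `(λ, μ_k)`; hence `λ ∂_λ log Sᵢ = Aᵢ` and
`μ_k ∂_{μ_k} log Sᵢ = y_ik - Aᵢ`, where `Aᵢ` is the posterior mean of the latent common count.
Since `L > 0`, the critical equations read `Σᵢ Aᵢ = nλ` and `Σᵢ (y_ik - Aᵢ) = nμ_k`; add them.
-/

open Finset Real

/-- Likelihood of the one-factor Poisson model:
`L(λ,μ) = e^{-n(λ+Σμ_k)} Π_i Σ_{u=0}^{min_k y_{ik}} (λ^u/u!) Π_k μ_k^{y_{ik}-u}/(y_{ik}-u)!`. -/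
noncomputable def factorLik {n m : ℕ} (y : Fin n → Fin m → ℕ) (lam : ℝ) (mu : Fin m → ℝ) : ℝ :=
  Real.exp (-(n : ℝ) * (lam + ∑ k, mu k)) *
    ∏ i, ∑ u ∈ Finset.range ((⨅ k, y i k) + 1),
      lam ^ u / (Nat.factorial u) *
        ∏ k, mu k ^ (y i k - u) / (Nat.factorial (y i k - u))

theorem hasDerivAt_pow_of_ne_zero {x : ℝ} (hx : x ≠ 0) (p : ℕ) :
    HasDerivAt (· ^ p) (x ^ p * (p / x)) x := by
  refine (hasDerivAt_pow p x).congr_deriv ?_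
  rcases p with _ | p
  · simp
  · rw [pow_succ, Nat.add_sub_cancel]
    field_simp

theorem HasDerivAt.exp_mul_finsetProd {ι : Type*} {s : Finset ι} {g : ℝ → ℝ} {f : ι → ℝ → ℝ}
    {g' x : ℝ} {c : ι → ℝ} (hg : HasDerivAt g g' x)
    (hf : ∀ i ∈ s, HasDerivAt (f i) (f i x * c i) x) :
    HasDerivAt (fun y => Real.exp (g y) * ∏ i ∈ s, f i y)
      (Real.exp (g x) * (∏ i ∈ s, f i x) * (g' + ∑ i ∈ s, c i)) x := by
  classical
  refine (hg.exp.mul (HasDerivAt.fun_finsetProd hf)).congr_deriv ?_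
  have : ∑ i ∈ s, (∏ j ∈ s.erase i, f j x) • (f i x * c i) =
      (∏ i ∈ s, f i x) * ∑ i ∈ s, c i := by
    rw [mul_sum]
    refine sum_congr rfl fun i hi => ?_
    rw [smul_eq_mul, ← mul_prod_erase s (f · x) hi]
    ring
  rw [this]
  ring

namespace OneFactorPoisson

variable {m : ℕ} (r : Fin m → ℕ) (lam : ℝ) (mu : Fin m → ℝ)

noncomputable def rowTerm (u : ℕ) : ℝ :=
  lam ^ u / (Nat.factorial u) * ∏ k, mu k ^ (r k - u) / (Nat.factorial (r k - u))

noncomputable def rowFactor : ℝ :=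
  ∑ u ∈ range ((⨅ k, r k) + 1), rowTerm r lam mu u

/-- The posterior mean of the common latent Poisson count `u` given the row `r`. -/
noncomputable def latentMean : ℝ :=
  (∑ u ∈ range ((⨅ k, r k) + 1), u * rowTerm r lam mu u) / rowFactor r lam mu

theorem factorLik_eq {n : ℕ} (y : Fin n → Fin m → ℕ) :
    factorLik y lam mu = exp (-(n : ℝ) * (lam + ∑ k, mu k)) * ∏ i, rowFactor (y i) lam mu :=
  rfl

variable {r lam mu}

theorem rowTerm_pos (hlam : 0 < lam) (hmu : ∀ k, 0 < mu k) (u : ℕ) : 0 < rowTerm r lam mu u :=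
  mul_pos (by positivity) (prod_pos fun k _ => have := hmu k; by positivity)

theorem rowFactor_pos (hlam : 0 < lam) (hmu : ∀ k, 0 < mu k) : 0 < rowFactor r lam mu :=
  sum_pos (fun u _ => rowTerm_pos hlam hmu u) nonempty_range_add_one

theorem hasDerivAt_rowTerm_lam (hlam : lam ≠ 0) (u : ℕ) :
    HasDerivAt (fun l => rowTerm r l mu u) (rowTerm r lam mu u * (u / lam)) lam := by
  refine (((hasDerivAt_pow_of_ne_zero hlam u).div_const _).mul_const _).congr_deriv ?_
  unfold rowTerm
  ring

theorem rowTerm_update (k : Fin m) (t : ℝ) (u : ℕ) :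
    rowTerm r lam (Function.update mu k t) u =
      lam ^ u / (Nat.factorial u) * (t ^ (r k - u) / (Nat.factorial (r k - u)) *
        ∏ l ∈ univ.erase k, mu l ^ (r l - u) / (Nat.factorial (r l - u))) := by
  rw [rowTerm, ← mul_prod_erase univ _ (mem_univ k), Function.update_self]
  congr 2
  refine prod_congr rfl fun l hl => ?_
  rw [Function.update_of_ne (ne_of_mem_erase hl)]

theorem hasDerivAt_rowTerm_update {k : Fin m} (hmu : mu k ≠ 0) (u : ℕ) :
    HasDerivAt (fun t => rowTerm r lam (Function.update mu k t) u)
      (rowTerm r lam mu u * ((r k - u : ℕ) / mu k)) (mu k) := by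
  simp_rw [rowTerm_update]
  refine ((((hasDerivAt_pow_of_ne_zero hmu _).div_const _).mul_const _).const_mul _).congr_deriv
    ?_
  have hterm := rowTerm_update (r := r) (lam := lam) (mu := mu) k (mu k) u
  rw [Function.update_eq_self] at hterm
  rw [hterm]
  ring

theorem rowFactor_mul_latentMean (hlam : 0 < lam) (hmu : ∀ k, 0 < mu k) :
    rowFactor r lam mu * latentMean r lam mu =
      ∑ u ∈ range ((⨅ k, r k) + 1), u * rowTerm r lam mu u :=
  mul_div_cancel₀ _ (rowFactor_pos hlam hmu).ne'

theorem hasDerivAt_rowFactor_lam (hlam : 0 < lam) (hmu : ∀ k, 0 < mu k) :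
    HasDerivAt (fun l => rowFactor r l mu) (rowFactor r lam mu * (latentMean r lam mu / lam))
      lam := by
  refine (HasDerivAt.fun_sum fun u _ => hasDerivAt_rowTerm_lam hlam.ne' u).congr_deriv ?_
  rw [← mul_div_assoc, rowFactor_mul_latentMean hlam hmu, sum_div]
  exact sum_congr rfl fun u _ => by ring

theorem hasDerivAt_rowFactor_update (hlam : 0 < lam) (hmu : ∀ k, 0 < mu k) (k : Fin m) :
    HasDerivAt (fun t => rowFactor r lam (Function.update mu k t))
      (rowFactor r lam mu * ((r k - latentMean r lam mu) / mu k)) (mu k) := by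
  refine (HasDerivAt.fun_sum fun u _ =>
    hasDerivAt_rowTerm_update (hmu k).ne' u).congr_deriv ?_
  rw [mul_div_assoc', mul_sub, rowFactor_mul_latentMean hlam hmu, rowFactor, sum_mul,
    ← sum_sub_distrib, sum_div]
  refine sum_congr rfl fun u hu => ?_
  have hu : u ≤ r k :=
    (Nat.lt_succ_iff.1 (mem_range.1 hu)).trans (ciInf_le (OrderBot.bddBelow _) k)
  rw [Nat.cast_sub hu]
  ring

theorem factorLik_pos {n : ℕ} (y : Fin n → Fin m → ℕ) (hlam : 0 < lam) (hmu : ∀ k, 0 < mu k) :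
    0 < factorLik y lam mu :=
  mul_pos (exp_pos _) (prod_pos fun _ _ => rowFactor_pos hlam hmu)

theorem hasDerivAt_factorLik_lam {n : ℕ} (y : Fin n → Fin m → ℕ) (hlam : 0 < lam)
    (hmu : ∀ k, 0 < mu k) :
    HasDerivAt (fun l => factorLik y l mu)
      (factorLik y lam mu * ((∑ i, latentMean (y i) lam mu) / lam - n)) lam := by
  have hexponent : HasDerivAt (fun l => -(n : ℝ) * (l + ∑ k, mu k)) (-n) lam := by
    simpa using ((hasDerivAt_id lam).add_const (∑ k, mu k)).const_mul (-(n : ℝ))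
  refine (hexponent.exp_mul_finsetProd fun _ _ =>
    hasDerivAt_rowFactor_lam hlam hmu).congr_deriv ?_
  rw [factorLik_eq, sum_div]
  ring

theorem hasDerivAt_factorLik_update {n : ℕ} (y : Fin n → Fin m → ℕ) (hlam : 0 < lam)
    (hmu : ∀ k, 0 < mu k) (k : Fin m) :
    HasDerivAt (fun t => factorLik y lam (Function.update mu k t))
      (factorLik y lam mu * ((∑ i, ((y i k : ℝ) - latentMean (y i) lam mu)) / mu k - n))
      (mu k) := by
  have hsum : HasDerivAt (fun t => ∑ l, Function.update mu k t l) 1 (mu k) := by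
    simpa using HasDerivAt.fun_sum (u := univ) fun l _ =>
      hasDerivAt_pi.1 (hasDerivAt_update mu k (mu k)) l
  have hexponent : HasDerivAt (fun t => -(n : ℝ) * (lam + ∑ l, Function.update mu k t l)) (-n)
      (mu k) := by
    simpa using (hsum.const_add lam).const_mul (-(n : ℝ))
  have hfactor (i : Fin n) : HasDerivAt (fun t => rowFactor (y i) lam (Function.update mu k t))
      (rowFactor (y i) lam (Function.update mu k (mu k)) *
        ((y i k - latentMean (y i) lam mu) / mu k)) (mu k) := by
    simpa only [Function.update_eq_self] using hasDerivAt_rowFactor_update hlam hmu k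
  refine (hexponent.exp_mul_finsetProd fun i _ => hfactor i).congr_deriv ?_
  simp only [Function.update_eq_self]
  rw [factorLik_eq, sum_div]
  ring

end OneFactorPoisson

open OneFactorPoisson in
theorem ml_equations_one_factor_poisson_general
    {n m : ℕ} (hn : 0 < n) (y : Fin n → Fin m → ℕ)
    (lam : ℝ) (mu : Fin m → ℝ) (hlam : 0 < lam) (hmu : ∀ k, 0 < mu k)
    (hcritLam : deriv (fun l => factorLik y l mu) lam = 0)
    (hcritMu : ∀ k, deriv (fun t => factorLik y lam (Function.update mu k t)) (mu k) = 0) :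
    ∀ k, (∑ i, (y i k : ℝ)) / n = mu k + lam := by
  intro k
  have hL := (factorLik_pos y hlam hmu).ne'
  have hsumLatent : ∑ i, latentMean (y i) lam mu = n * lam := by
    rw [(hasDerivAt_factorLik_lam y hlam hmu).deriv, mul_eq_zero, or_iff_right hL,
      sub_eq_zero, div_eq_iff hlam.ne'] at hcritLam
    exact hcritLam
  have hsumResidual : ∑ i, ((y i k : ℝ) - latentMean (y i) lam mu) = n * mu k := by
    have hcrit := hcritMu k
    rw [(hasDerivAt_factorLik_update y hlam hmu k).deriv, mul_eq_zero, or_iff_right hL,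
      sub_eq_zero, div_eq_iff (hmu k).ne'] at hcrit
    exact hcrit
  rw [sum_sub_distrib] at hsumResidual
  rw [div_eq_iff (by positivity)]
  linarith

/-- Any critical point `(λ̂, μ̂)` of the one-factor Poisson likelihood satisfies
`ȳ_k = μ̂_k + λ̂` for every `k`, where `ȳ_k = n⁻¹ Σ_i y_{ik}`. -/
theorem ml_equations_one_factor_poisson
    {n m : ℕ} (hn : 0 < n) (hm : 0 < m) (y : Fin n → Fin m → ℕ)
    (hy : ∃ i, y i ⟨0, hm⟩ ≠ ⨅ k, y i k)
    (lam : ℝ) (mu : Fin m → ℝ) (hlam : 0 < lam) (hmu : ∀ k, 0 < mu k)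
    (hcritLam : deriv (fun l => factorLik y l mu) lam = 0)
    (hcritMu : ∀ k, deriv (fun t => factorLik y lam (Function.update mu k t)) (mu k) = 0) :
    ∀ k, (∑ i, (y i k : ℝ)) / n = mu k + lam :=
  ml_equations_one_factor_poisson_general hn y lam mu hlam hmu hcritLam hcritMu
end

section
/- For each k, ∂L/∂μ_k evaluated at a point where ∂L/∂λ = 0 equals (nL/μ_k)(ȳ_k − μ_k − λ), where L is the Poisson factor model likelihood L(λ, μ1, ..., μm) = e^{-n(λ+Σμ_j)} Π_{i=1}^n Σ_{u=0}^{z_i} (λ^u/u!) Π_{j=1}^m μ_j^{y_{ij}-u}/(y_{ij}-u)!. -/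
open Finset Real

/-!
Each summand `λ^u/u! · Π_j μ_j^{y_{ij}-u}/(y_{ij}-u)!` is homogeneous of degree
`u + (y_{ik} - u) = y_{ik}` in the pair `(λ, μ_k)`, because `u ≤ z_i ≤ y_{ik}`. Hence
the product over `i` is an eigenfunction of the Euler operator `λ ∂_λ + μ_k ∂_{μ_k}` with
eigenvalue `Σ_i y_{ik}`, and the exponential factor is one with eigenvalue `-n(λ + μ_k)`.
At a point where `∂_λ L = 0` this leaves `μ_k ∂_{μ_k} L = (Σ_i y_{ik} - n(λ + μ_k)) L`.
-/

theorem mul_mul_pow_sub_one {R : Type*} [CommSemiring R] (x : R) (p : ℕ) :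
    x * (p * x ^ (p - 1)) = p * x ^ p := by
  rcases eq_or_ne p 0 with rfl | hp
  · simp
  · rw [mul_left_comm, mul_pow_sub_one hp]

def EulerRelationAt (F : ℝ → ℝ → ℝ) (c x t : ℝ) : Prop :=
  ∃ a b, HasDerivAt (F · t) a x ∧ HasDerivAt (F x ·) b t ∧ x * a + t * b = c * F x t

section EulerRelationAt

variable {F G : ℝ → ℝ → ℝ} {c d x t : ℝ}

theorem eulerRelationAt_const (r : ℝ) : EulerRelationAt (fun _ _ => r) 0 x t :=
  ⟨0, 0, hasDerivAt_const _ _, hasDerivAt_const _ _, by simp⟩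

theorem eulerRelationAt_pow_left (p : ℕ) : EulerRelationAt (fun l _ => l ^ p) p x t :=
  ⟨_, 0, hasDerivAt_pow p x, hasDerivAt_const _ _, by rw [mul_mul_pow_sub_one]; ring⟩

theorem eulerRelationAt_pow_right (p : ℕ) : EulerRelationAt (fun _ s => s ^ p) p x t :=
  ⟨0, _, hasDerivAt_const _ _, hasDerivAt_pow p t, by rw [mul_mul_pow_sub_one]; ring⟩

theorem eulerRelationAt_exp_linear (a K : ℝ) :
    EulerRelationAt (fun l s => exp (a * (l + (s + K)))) (a * (x + t)) x t := by
  refine ⟨_, _, (((hasDerivAt_id' x).add_const (t + K)).const_mul a).exp,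
    ((((hasDerivAt_id' t).add_const K).const_add x).const_mul a).exp, ?_⟩
  ring

theorem EulerRelationAt.mul (hF : EulerRelationAt F c x t) (hG : EulerRelationAt G d x t) :
    EulerRelationAt (fun l s => F l s * G l s) (c + d) x t := by
  obtain ⟨a, b, ha, hb, hab⟩ := hF
  obtain ⟨a', b', ha', hb', hab'⟩ := hG
  exact ⟨_, _, ha.mul ha', hb.mul hb', by linear_combination G x t * hab + F x t * hab'⟩

theorem EulerRelationAt.div_const (h : EulerRelationAt F c x t) (r : ℝ) :
    EulerRelationAt (fun l s => F l s / r) c x t := by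
  obtain ⟨a, b, ha, hb, hab⟩ := h
  exact ⟨_, _, ha.div_const r, hb.div_const r, by linear_combination hab / r⟩

theorem EulerRelationAt.prod {ι : Type*} {s : Finset ι} {F : ι → ℝ → ℝ → ℝ}
    {c : ι → ℝ} (h : ∀ i ∈ s, EulerRelationAt (F i) (c i) x t) :
    EulerRelationAt (fun l s' => ∏ i ∈ s, F i l s') (∑ i ∈ s, c i) x t := by
  classical
  induction s using Finset.induction_on with
  | empty => simpa using eulerRelationAt_const 1
  | insert j s hj ih =>
    simp_rw [prod_insert hj, sum_insert hj]
    exact (h j (mem_insert_self j s)).mul (ih fun i hi => h i (mem_insert_of_mem hi))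

theorem EulerRelationAt.sum {ι : Type*} {s : Finset ι} {F : ι → ℝ → ℝ → ℝ}
    (h : ∀ i ∈ s, EulerRelationAt (F i) c x t) :
    EulerRelationAt (fun l s' => ∑ i ∈ s, F i l s') c x t := by
  choose! a b ha hb hab using h
  refine ⟨∑ i ∈ s, a i, ∑ i ∈ s, b i, HasDerivAt.fun_sum ha, HasDerivAt.fun_sum hb, ?_⟩
  rw [mul_sum, mul_sum, mul_sum, ← sum_add_distrib]
  exact sum_congr rfl hab

end EulerRelationAt

theorem eulerRelationAt_poissonTerm {ι : Type*} [Fintype ι] [DecidableEq ι] (y : ι → ℕ)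
    (mu : ι → ℝ) (k : ι) {u : ℕ} (hu : u ≤ y k) (x t : ℝ) :
    EulerRelationAt (fun l s => l ^ u / (u.factorial : ℝ) *
      ∏ j, Function.update mu k s j ^ (y j - u) / ((y j - u).factorial : ℝ)) (y k) x t := by
  have hfactor : ∀ j, EulerRelationAt
      (fun _ s => Function.update mu k s j ^ (y j - u) / ((y j - u).factorial : ℝ))
      (if j = k then ((y k - u : ℕ) : ℝ) else 0) x t := by
    intro j
    refine EulerRelationAt.div_const ?_ _
    rcases eq_or_ne j k with rfl | hj
    · simpa using eulerRelationAt_pow_right (y j - u)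
    · simpa [hj] using eulerRelationAt_const (mu j ^ (y j - u))
  have h := ((eulerRelationAt_pow_left u).div_const (u.factorial : ℝ)).mul
    (EulerRelationAt.prod (s := univ) fun j _ => hfactor j)
  rwa [sum_ite_eq' univ k, if_pos (mem_univ k), ← Nat.cast_add, Nat.add_sub_cancel' hu] at h

theorem eulerRelationAt_factorLik {n m : ℕ} (y : Fin n → Fin m → ℕ) (mu : Fin m → ℝ)
    (k : Fin m) (x t : ℝ) :
    EulerRelationAt (fun l s => factorLik y l (Function.update mu k s))
      (-n * (x + t) + ∑ i, (y i k : ℝ)) x t := by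
  simp only [factorLik, sum_update_of_mem (mem_univ k)]
  refine (eulerRelationAt_exp_linear _ _).mul (EulerRelationAt.prod fun i _ =>
    EulerRelationAt.sum fun u hu => eulerRelationAt_poissonTerm (y i) mu k ?_ x t)
  exact (Nat.le_of_lt_succ (mem_range.1 hu)).trans (ciInf_le' _ k)

theorem partial_mu_at_lambda_critical_general
    {n m : ℕ} (hn : 0 < n) (y : Fin n → Fin m → ℕ)
    (lam : ℝ) (mu : Fin m → ℝ) (hmu : ∀ k, 0 < mu k)
    (hcritLam : deriv (fun l => factorLik y l mu) lam = 0) (k : Fin m) :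
    deriv (fun t => factorLik y lam (Function.update mu k t)) (mu k)
      = (n * factorLik y lam mu / mu k) * ((∑ i, (y i k : ℝ)) / n - mu k - lam) := by
  obtain ⟨a, b, ha, hb, hab⟩ := eulerRelationAt_factorLik y mu k lam (mu k)
  simp only [Function.update_eq_self] at ha hab
  rw [ha.deriv] at hcritLam
  rw [hb.deriv]
  have hmk : mu k ≠ 0 := (hmu k).ne'
  have hn' : (n : ℝ) ≠ 0 := by positivity
  field_simp
  linear_combination hab - lam * hcritLam

/-- At any point where `∂L/∂λ = 0`, the partial derivative `∂L/∂μ_k` equals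
`(nL/μ_k)(ȳ_k − μ_k − λ)`, where `ȳ_k = n⁻¹ Σ_i y_{ik}`. -/
theorem partial_mu_at_lambda_critical
    {n m : ℕ} (hn : 0 < n) (hm : 0 < m) (y : Fin n → Fin m → ℕ)
    (lam : ℝ) (mu : Fin m → ℝ) (hlam : 0 < lam) (hmu : ∀ k, 0 < mu k)
    (hcritLam : deriv (fun l => factorLik y l mu) lam = 0) (k : Fin m) :
    deriv (fun t => factorLik y lam (Function.update mu k t)) (mu k)
      = (n * factorLik y lam mu / mu k) * ((∑ i, (y i k : ℝ)) / n - mu k - lam) :=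
  partial_mu_at_lambda_critical_general hn y lam mu hmu hcritLam k
end

section
/- For the truncated Poisson distribution with rate λ > 0 and truncation point A ≥ 1, the variance is strictly less than the mean: Var(Y) < E[Y]. -/
open Finset

/-!
Write `t j = λ^j / j!` and `s n = ∑_{j<n} t j`, so that the normaliser is `s (A+1)`. The recursion
`(j+1) t (j+1) = λ t j` gives the factorial moments `∑ y t y = λ s A` and `∑ y(y-1) t y = λ² s (A-1)`,
whence `Var Y - E Y = λ² (s (A-1) s (A+1) - s A ²) / s (A+1)²`. This is negative because the partial
sums of a log-concave positive sequence are strictly log-concave.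
-/

noncomputable def truncPoisPMF (lam : ℝ) (A : ℕ) (y : ℕ) : ℝ :=
  (lam ^ y / (Nat.factorial y)) / ∑ j ∈ Finset.range (A + 1), lam ^ j / (Nat.factorial j)

section PartialSums

variable {t : ℕ → ℝ}

theorem sum_range_mul_sum_range_lt_sq_of_logConcave (hpos : ∀ j, 0 < t j)
    (hlc : ∀ i n, i ≤ n → t i * t (n + 1) ≤ t (i + 1) * t n) (n : ℕ) :
    (∑ j ∈ range n, t j) * ∑ j ∈ range (n + 2), t j < (∑ j ∈ range (n + 1), t j) ^ 2 := by
  -- `s (n+1)² - s n · s (n+2) = t n · s (n+1) - t (n+1) · s n`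
  suffices (∑ j ∈ range n, t j) * t (n + 1) < (∑ j ∈ range (n + 1), t j) * t n by
    simp only [sum_range_succ] at this ⊢
    nlinarith
  calc (∑ j ∈ range n, t j) * t (n + 1)
      ≤ ∑ j ∈ range n, t (j + 1) * t n := by
        rw [sum_mul]
        exact sum_le_sum fun i hi => hlc i n (mem_range.mp hi).le
    _ < ∑ j ∈ range n, t (j + 1) * t n + t 0 * t n := lt_add_of_pos_right _ (by nlinarith [hpos 0, hpos n])
    _ = (∑ j ∈ range (n + 1), t j) * t n := by rw [sum_mul, sum_range_succ' (fun j => t j * t n)]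

end PartialSums

noncomputable def poissonWeight (lam : ℝ) (j : ℕ) : ℝ := lam ^ j / j.factorial

namespace poissonWeight

variable {lam : ℝ}

theorem pos (hlam : 0 < lam) (j : ℕ) : 0 < poissonWeight lam j := by
  unfold poissonWeight
  positivity

theorem succ_mul (j : ℕ) : ((j : ℝ) + 1) * poissonWeight lam (j + 1) = lam * poissonWeight lam j := by
  unfold poissonWeight
  rw [Nat.factorial_succ]
  push_cast
  field_simp
  ring

theorem logConcave (hlam : 0 < lam) {i n : ℕ} (hin : i ≤ n) :
    poissonWeight lam i * poissonWeight lam (n + 1) ≤ poissonWeight lam (i + 1) * poissonWeight lam n := by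
  -- both sides times `(i+1)(n+1)` become `λ t i t n` times `i+1`, resp. `n+1`
  have hin' : (i : ℝ) + 1 ≤ n + 1 := by exact_mod_cast Nat.succ_le_succ hin
  have hprod : 0 < lam * poissonWeight lam i * poissonWeight lam n := by
    have := pos hlam i; have := pos hlam n; positivity
  have key : ((i : ℝ) + 1) * ((n + 1) * (poissonWeight lam i * poissonWeight lam (n + 1)))
      ≤ ((i : ℝ) + 1) * ((n + 1) * (poissonWeight lam (i + 1) * poissonWeight lam n)) := by
    calc _ = ((i : ℝ) + 1) * (poissonWeight lam i * (((n : ℝ) + 1) * poissonWeight lam (n + 1))) := by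
            ring
      _ = ((i : ℝ) + 1) * (lam * poissonWeight lam i * poissonWeight lam n) := by rw [succ_mul]; ring
      _ ≤ ((n : ℝ) + 1) * (lam * poissonWeight lam i * poissonWeight lam n) := by gcongr
      _ = _ := by rw [← succ_mul i]; ring
  exact le_of_mul_le_mul_left (le_of_mul_le_mul_left key (by positivity)) (by positivity)

theorem sum_range_succ_natCast_mul (n : ℕ) :
    ∑ y ∈ range (n + 1), (y : ℝ) * poissonWeight lam y = lam * ∑ j ∈ range n, poissonWeight lam j := by
  rw [sum_range_succ', mul_sum]
  push_cast
  simp only [zero_mul, add_zero]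
  exact sum_congr rfl fun j _ => succ_mul j

theorem sum_range_add_two_sq_sub_self_mul (n : ℕ) :
    ∑ y ∈ range (n + 2), ((y : ℝ) ^ 2 - y) * poissonWeight lam y
      = lam ^ 2 * ∑ j ∈ range n, poissonWeight lam j := by
  rw [sum_range_succ']
  push_cast
  have hterm : ∀ j ∈ range (n + 1), (((j : ℝ) + 1) ^ 2 - (j + 1)) * poissonWeight lam (j + 1)
      = lam * ((j : ℝ) * poissonWeight lam j) := fun j _ => by
    rw [show ((j : ℝ) + 1) ^ 2 - (j + 1) = j * (j + 1) by ring, mul_assoc, succ_mul]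
    ring
  rw [sum_congr rfl hterm, ← mul_sum, sum_range_succ_natCast_mul]
  ring

end poissonWeight

theorem sum_mul_truncPoisPMF (f : ℕ → ℝ) (lam : ℝ) (A : ℕ) :
    ∑ y ∈ range (A + 1), f y * truncPoisPMF lam A y
      = (∑ y ∈ range (A + 1), f y * poissonWeight lam y) / ∑ j ∈ range (A + 1), poissonWeight lam j := by
  rw [sum_div]
  exact sum_congr rfl fun y _ => (mul_div_assoc _ _ _).symm

/-- Underdispersion of the right-truncated Poisson: for rate `λ > 0` and truncation
point `A ≥ 1`, the variance is strictly less than the mean. -/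
theorem truncated_poisson_underdispersed (lam : ℝ) (hlam : 0 < lam) (A : ℕ) (hA : 1 ≤ A) :
    (∑ y ∈ Finset.range (A + 1), (y : ℝ) ^ 2 * truncPoisPMF lam A y)
        - (∑ y ∈ Finset.range (A + 1), (y : ℝ) * truncPoisPMF lam A y) ^ 2
      < ∑ y ∈ Finset.range (A + 1), (y : ℝ) * truncPoisPMF lam A y := by
  obtain ⟨n, rfl⟩ : ∃ n, A = n + 1 := ⟨A - 1, by omega⟩
  set s : ℕ → ℝ := fun m => ∑ j ∈ range m, poissonWeight lam j
  have hT : 0 < s (n + 2) := sum_pos (fun j _ => poissonWeight.pos hlam j) nonempty_range_add_one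
  have hmean : ∑ y ∈ range (n + 1 + 1), (y : ℝ) * truncPoisPMF lam (n + 1) y
      = lam * s (n + 1) / s (n + 2) := by
    rw [sum_mul_truncPoisPMF, poissonWeight.sum_range_succ_natCast_mul]
  have hsecond : ∑ y ∈ range (n + 1 + 1), (y : ℝ) ^ 2 * truncPoisPMF lam (n + 1) y
      = (lam ^ 2 * s n + lam * s (n + 1)) / s (n + 2) := by
    rw [sum_mul_truncPoisPMF, ← poissonWeight.sum_range_add_two_sq_sub_self_mul,
      ← poissonWeight.sum_range_succ_natCast_mul, ← sum_add_distrib]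
    simp only [sub_mul, sub_add_cancel]
    rfl
  have hlc : s n * s (n + 2) < s (n + 1) ^ 2 :=
    sum_range_mul_sum_range_lt_sq_of_logConcave (poissonWeight.pos hlam)
      (fun _ _ => poissonWeight.logConcave hlam) n
  rw [hmean, hsecond, ← sub_neg]
  have hdiff : (lam ^ 2 * s n + lam * s (n + 1)) / s (n + 2) - (lam * s (n + 1) / s (n + 2)) ^ 2
      - lam * s (n + 1) / s (n + 2) = lam ^ 2 * (s n * s (n + 2) - s (n + 1) ^ 2) / s (n + 2) ^ 2 := by
    field_simp
    ring
  rw [hdiff]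
  exact div_neg_of_neg_of_pos (mul_neg_of_pos_of_neg (by positivity) (sub_neg.mpr hlc)) (by positivity)
end
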